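/- For n ≥ 2, the map sending a Λ₀-path p to its highest-lift partition λ(p) is a bijection between the set of Λ₀-paths and the set of n-regular partitions. -/
import Mathlib


/-- A `Λ₀`-path: a sequence `γ : ℕ → {0,…,n-1}` with `γ k = k % n` for all large `k`. -/
def PathSet (n : ℕ) : Set (ℕ → ℕ) :=
  {γ | (∀ k, γ k < n) ∧ ∃ K, ∀ k, K ≤ k → γ k = k % n}

/-- The length of a path: the minimal `K` with `γ k = k % n` for all `k ≥ K`. -/
noncomputable def plen (n : ℕ) (γ : ℕ → ℕ) : ℕ :=
  sInf {K | ∀ k, K ≤ k → γ k = k % n}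

/-- The sequence `t_k` of the highest-lift construction: `t_k = 0` for `k ≥ k*`, and,
recursively downwards, `t_k ≡ k - γ k (mod n)` with `0 ≤ t_k - t_{k+1} < n`. -/
def tseq (n : ℕ) (γ : ℕ → ℕ) (kstar : ℕ) (k : ℕ) : ℤ :=
  if h : kstar ≤ k then 0
  else tseq n γ kstar (k + 1) + (((k : ℤ) - γ k - tseq n γ kstar (k + 1)) % n)
termination_by kstar - k
decreasing_by omega

/-- The highest-lift partition of a path, given as the (weakly decreasing) sequence of
its parts: part number `j+1` is the number of `k` with `t_k ≥ j+1`
(i.e. the partition whose conjugate is `(t_0, t_1, …, t_{k*-1})`). -/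
noncomputable def highestLift (n : ℕ) (γ : ℕ → ℕ) : ℕ → ℕ :=
  fun j => {k : ℕ | (j : ℤ) + 1 ≤ tseq n γ (plen n γ) k}.ncard

/-- A partition, given as a weakly decreasing sequence of parts (extended by zeros). -/
def IsPartitionFun (f : ℕ → ℕ) : Prop :=
  (∀ i j : ℕ, i ≤ j → f j ≤ f i) ∧ ∃ N, ∀ i, N ≤ i → f i = 0

/-- The set of `n`-regular partitions: no part value `v ≥ 1` occurs `n` or more times. -/
def RegularSet (n : ℕ) : Set (ℕ → ℕ) :=
  {f | IsPartitionFun f ∧ ∀ v : ℕ, 1 ≤ v → {j : ℕ | f j = v}.ncard < n}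


lemma HL_mem_iff_lt_ncard {S : Set ℕ} (hfin : S.Finite)
    (hdc : ∀ ⦃a b : ℕ⦄, a ≤ b → b ∈ S → a ∈ S) (k : ℕ) :
    k ∈ S ↔ k < S.ncard := by
  constructor
  · intro hk
    have hsub : Set.Iic k ⊆ S := fun a ha => hdc ha hk
    have h1 := Set.ncard_le_ncard hsub hfin
    have hIic : (Set.Iic k).ncard = k + 1 := by
      rw [← Finset.coe_Iic, Set.ncard_coe_finset, Nat.card_Iic]
    omega
  · intro hk
    by_contra hkS
    have hsub : S ⊆ Set.Iio k := by
      intro m hm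
      by_contra hmk
      exact hkS (hdc (le_of_not_gt hmk) hm)
    have h1 := Set.ncard_le_ncard hsub (Set.finite_Iio k)
    have hIio : (Set.Iio k).ncard = k := by
      rw [← Finset.coe_Iio, Set.ncard_coe_finset, Nat.card_Iio]
    omega

lemma tseq_zero (n : ℕ) (γ : ℕ → ℕ) (K : ℕ) (k : ℕ) (h : K ≤ k) : tseq n γ K k = 0 := by
  conv_lhs => rw [tseq]
  exact dif_pos h

lemma tseq_succ (n : ℕ) (γ : ℕ → ℕ) (K : ℕ) (k : ℕ) (h : k < K) :
    tseq n γ K k = tseq n γ K (k+1) + (((k:ℤ) - γ k - tseq n γ K (k+1)) % n) := by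
  conv_lhs => rw [tseq]
  exact dif_neg (by omega)

lemma tseq_step (n : ℕ) (γ : ℕ → ℕ) (K : ℕ) (hn : 0 < n) (k : ℕ) :
    tseq n γ K (k+1) ≤ tseq n γ K k ∧ tseq n γ K k < tseq n γ K (k+1) + n := by
  by_cases h : K ≤ k
  · rw [tseq_zero n γ K k h, tseq_zero n γ K (k+1) (by omega : K ≤ k+1)]
    constructor
    · exact le_refl _
    · omega
  · rw [tseq_succ n γ K k (by omega)]
    have h1 : 0 ≤ ((k:ℤ) - γ k - tseq n γ K (k+1)) % n :=
      Int.emod_nonneg _ (by exact_mod_cast hn.ne')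
    have h2 : ((k:ℤ) - γ k - tseq n γ K (k+1)) % n < n :=
      Int.emod_lt_of_pos _ (by exact_mod_cast hn)
    omega

lemma tseq_le_tseq (n : ℕ) (γ : ℕ → ℕ) (K : ℕ) (hn : 0 < n) {a b : ℕ} (h : a ≤ b) :
    tseq n γ K b ≤ tseq n γ K a := by
  induction h with
  | refl => exact le_rfl
  | step h ih => exact le_trans (tseq_step n γ K hn _).1 ih

lemma tseq_nonneg (n : ℕ) (γ : ℕ → ℕ) (K : ℕ) (hn : 0 < n) (k : ℕ) :
    0 ≤ tseq n γ K k := by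
  have h1 := tseq_le_tseq n γ K hn (Nat.le_add_right k K)
  rwa [tseq_zero n γ K (k+K) (Nat.le_add_left K k)] at h1

-- congruence helper: if g < n and (a - g) ≡ r mod n with 0 ≤ r then ...
lemma emod_sub_emod (a b n : ℤ) : (a - b % n) % n = (a - b) % n := by
  conv_rhs => rw [Int.sub_emod]
  rw [Int.sub_emod, Int.emod_emod_of_dvd _ dvd_rfl]

lemma tseq_mod (n : ℕ) (γ : ℕ → ℕ) (K : ℕ) (hn : 0 < n) (k : ℕ)
    (hγk : γ k < n) (hup : K ≤ k → γ k = k % n) :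
    ((k:ℤ) - tseq n γ K k) % n = γ k := by
  by_cases h : K ≤ k
  · rw [tseq_zero n γ K k h, sub_zero, hup h]
    push_cast
    exact Int.emod_emod_of_dvd _ dvd_rfl |>.symm ▸ rfl
  · rw [tseq_succ n γ K k (by omega)]
    set s := tseq n γ K (k+1) with hs
    have h1 : (k:ℤ) - (s + (((k:ℤ) - γ k - s) % n)) = ((k:ℤ) - s) - (((k:ℤ) - γ k - s) % n) := by ring
    rw [h1, emod_sub_emod, show ((k:ℤ) - s) - ((k:ℤ) - γ k - s) = γ k by ring]
    exact Int.emod_eq_of_lt (by positivity) (by exact_mod_cast hγk)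

lemma plen_spec (n : ℕ) (γ : ℕ → ℕ) (h : γ ∈ PathSet n) :
    ∀ k, plen n γ ≤ k → γ k = k % n := by
  obtain ⟨h1, K, hK⟩ := h
  exact Nat.sInf_mem (⟨K, hK⟩ : Set.Nonempty {K | ∀ k, K ≤ k → γ k = k % n})

lemma plen_min (n : ℕ) (γ : ℕ → ℕ) (h : γ ∈ PathSet n) (h0 : 0 < plen n γ) :
    γ (plen n γ - 1) ≠ (plen n γ - 1) % n := by
  intro hc
  have hmem : plen n γ - 1 ∈ {K | ∀ k, K ≤ k → γ k = k % n} := by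
    intro k hk
    rcases Nat.eq_or_lt_of_le hk with h' | h'
    · rw [← h']; exact hc
    · exact plen_spec n γ h k (by omega)
  have := Nat.sInf_le hmem
  unfold plen at this h0
  omega

lemma tseq_pos (n : ℕ) (γ : ℕ → ℕ) (hn : 0 < n) (h : γ ∈ PathSet n) {k : ℕ}
    (hk : k < plen n γ) : 1 ≤ tseq n γ (plen n γ) k := by
  set K := plen n γ with hK
  have h0 : 0 < K := by omega
  have hle : tseq n γ K (K - 1) ≤ tseq n γ K k := tseq_le_tseq n γ K hn (by omega)
  have hval : tseq n γ K (K-1) = ((K - 1 : ℕ) - (γ (K-1)) : ℤ) % n := by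
    rw [tseq_succ n γ K (K-1) (by omega), tseq_zero n γ K (K-1+1) (by omega)]
    ring_nf
  have hnz : tseq n γ K (K-1) ≠ 0 := by
    rw [hval]
    intro hc
    apply plen_min n γ h h0
    have h2 : ((K-1:ℕ) : ℤ) % n = (γ (K-1) : ℤ) % n :=
      Int.emod_eq_emod_iff_emod_sub_eq_zero.mpr hc
    have h3 : (γ (K-1) : ℤ) % n = γ (K-1) :=
      Int.emod_eq_of_lt (by positivity) (by exact_mod_cast h.1 (K-1))
    have h4 : (((K-1) % n : ℕ) : ℤ) = ((K-1:ℕ):ℤ) % n := by push_cast; ring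
    have : ((γ (K-1) : ℕ) : ℤ) = (((K-1) % n : ℕ) : ℤ) := by rw [h4, h2, h3]
    exact_mod_cast this
  have hnn := tseq_nonneg n γ K hn (K-1)
  omega

lemma tseq_eq_zero_iff (n : ℕ) (γ : ℕ → ℕ) (hn : 0 < n) (h : γ ∈ PathSet n) (k : ℕ) :
    tseq n γ (plen n γ) k = 0 ↔ plen n γ ≤ k := by
  constructor
  · intro hz
    by_contra hc
    have := tseq_pos n γ hn h (by omega : k < plen n γ)
    omega
  · exact tseq_zero n γ (plen n γ) k

lemma star (n : ℕ) (γ : ℕ → ℕ) (hn : 0 < n) (h : γ ∈ PathSet n) (j k : ℕ) :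
    (j:ℤ) + 1 ≤ tseq n γ (plen n γ) k ↔ k < highestLift n γ j := by
  have hfin : {k : ℕ | (j : ℤ) + 1 ≤ tseq n γ (plen n γ) k}.Finite := by
    apply Set.Finite.subset (Set.finite_Iio (plen n γ))
    intro m hm
    simp only [Set.mem_setOf_eq] at hm
    simp only [Set.mem_Iio]
    by_contra hc
    rw [tseq_zero n γ (plen n γ) m (by omega)] at hm
    omega
  have hdc : ∀ ⦃a b : ℕ⦄, a ≤ b → b ∈ {k : ℕ | (j : ℤ) + 1 ≤ tseq n γ (plen n γ) k} →
      a ∈ {k : ℕ | (j : ℤ) + 1 ≤ tseq n γ (plen n γ) k} := by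
    intro a b hab hb
    exact le_trans hb (tseq_le_tseq n γ (plen n γ) hn hab)
  exact HL_mem_iff_lt_ncard hfin hdc k

lemma hl_finite (n : ℕ) (γ : ℕ → ℕ) (j : ℕ) :
    {k : ℕ | (j : ℤ) + 1 ≤ tseq n γ (plen n γ) k}.Finite := by
  apply Set.Finite.subset (Set.finite_Iio (plen n γ))
  intro m hm
  simp only [Set.mem_setOf_eq] at hm
  simp only [Set.mem_Iio]
  by_contra hc
  rw [tseq_zero n γ (plen n γ) m (by omega)] at hm
  omega

lemma hl_mapsTo (n : ℕ) (hn : 2 ≤ n) :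
    Set.MapsTo (highestLift n) (PathSet n) (RegularSet n) := by
  intro γ hγ
  have hn0 : 0 < n := by omega
  set K := plen n γ with hK
  set t := tseq n γ K with ht
  refine ⟨⟨?_, ?_⟩, ?_⟩
  · -- decreasing
    intro i j hij
    apply Set.ncard_le_ncard _ (hl_finite n γ i)
    intro k hk
    simp only [Set.mem_setOf_eq] at *
    have : (i:ℤ) + 1 ≤ (j:ℤ) + 1 := by omega
    omega
  · -- eventually zero
    refine ⟨(t 0).toNat, fun j hj => ?_⟩
    have : {k : ℕ | (j : ℤ) + 1 ≤ t k} = ∅ := by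
      ext k
      simp only [Set.mem_setOf_eq, Set.mem_empty_iff_false, iff_false, not_le]
      have h1 : t k ≤ t 0 := tseq_le_tseq n γ K hn0 (Nat.zero_le k)
      have h2 : 0 ≤ t 0 := tseq_nonneg n γ K hn0 0
      omega
    simp only [highestLift, ← hK, ← ht, this, Set.ncard_empty]
  · -- n-regular
    intro v hv
    obtain ⟨w, rfl⟩ : ∃ w, v = w + 1 := ⟨v - 1, by omega⟩
    have hset : {j : ℕ | highestLift n γ j = w + 1}
        = Set.Ico (t (w+1)).toNat (t w).toNat := by
      ext j
      simp only [Set.mem_setOf_eq, Set.mem_Ico]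
      have h1 := star n γ hn0 hγ j w
      have h2 := star n γ hn0 hγ j (w+1)
      have h3 := tseq_nonneg n γ K hn0 w
      have h4 := tseq_nonneg n γ K hn0 (w+1)
      rw [← hK, ← ht] at h1 h2
      push_cast at h2
      omega
    rw [hset, ← Finset.coe_Ico, Set.ncard_coe_finset, Nat.card_Ico]
    have h5 := tseq_step n γ K hn0 w
    have h4 := tseq_nonneg n γ K hn0 (w+1)
    rw [← ht] at h5 h4
    omega

lemma hl_injOn (n : ℕ) (hn : 2 ≤ n) :
    Set.InjOn (highestLift n) (PathSet n) := by
  intro γ1 h1 γ2 h2 heq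
  have hn0 : 0 < n := by omega
  have hts : ∀ k, tseq n γ1 (plen n γ1) k = tseq n γ2 (plen n γ2) k := by
    intro k
    have e1 : ∀ j : ℕ, ((j:ℤ) + 1 ≤ tseq n γ1 (plen n γ1) k ↔
        (j:ℤ) + 1 ≤ tseq n γ2 (plen n γ2) k) := by
      intro j
      rw [star n γ1 hn0 h1 j k, star n γ2 hn0 h2 j k, heq]
    have p1 := tseq_nonneg n γ1 (plen n γ1) hn0 k
    have p2 := tseq_nonneg n γ2 (plen n γ2) hn0 k
    rcases lt_trichotomy (tseq n γ1 (plen n γ1) k) (tseq n γ2 (plen n γ2) k) with h | h | h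
    · have := (e1 (tseq n γ1 (plen n γ1) k).toNat).mpr
      omega
    · exact h
    · have := (e1 (tseq n γ2 (plen n γ2) k).toNat).mp
      omega
  have hplen : plen n γ1 = plen n γ2 := by
    have hiff : ∀ k, k < plen n γ1 ↔ k < plen n γ2 := by
      intro k
      have a1 := tseq_pos n γ1 hn0 h1 (k := k)
      have a2 := tseq_pos n γ2 hn0 h2 (k := k)
      have b1 := (tseq_eq_zero_iff n γ1 hn0 h1 k).mpr
      have b2 := (tseq_eq_zero_iff n γ2 hn0 h2 k).mpr
      have := hts k
      constructor <;> intro hh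
      · by_contra hc
        have := b2 (by omega)
        have := a1 hh
        omega
      · by_contra hc
        have := b1 (by omega)
        have := a2 hh
        omega
    rcases lt_trichotomy (plen n γ1) (plen n γ2) with h | h | h
    · have := (hiff (plen n γ1)).mpr h; omega
    · exact h
    · have := (hiff (plen n γ2)).mp h; omega
  funext k
  have m1 := tseq_mod n γ1 (plen n γ1) hn0 k (h1.1 k) (plen_spec n γ1 h1 k)
  have m2 := tseq_mod n γ2 (plen n γ2) hn0 k (h2.1 k) (plen_spec n γ2 h2 k)
  rw [hts k] at m1
  have : (γ1 k : ℤ) = γ2 k := by rw [← m1, ← m2]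
  exact_mod_cast this

lemma hl_surjOn (n : ℕ) (hn : 2 ≤ n) :
    Set.SurjOn (highestLift n) (PathSet n) (RegularSet n) := by
  intro f hf
  obtain ⟨⟨hdec, N, hN⟩, hreg⟩ := hf
  have hn0 : 0 < n := by omega
  -- the conjugate sequence
  set T : ℕ → ℕ := fun k => {j : ℕ | k + 1 ≤ f j}.ncard with hT
  have ffin : ∀ k, {j : ℕ | k + 1 ≤ f j}.Finite := by
    intro k
    apply Set.Finite.subset (Set.finite_Iio N)
    intro j hj
    simp only [Set.mem_setOf_eq] at hj
    simp only [Set.mem_Iio]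
    by_contra hc
    rw [hN j (by omega)] at hj
    omega
  have fstar : ∀ k j, k + 1 ≤ f j ↔ j < T k := by
    intro k j
    exact HL_mem_iff_lt_ncard (ffin k) (fun a b hab hb => le_trans hb (hdec a b hab)) j
  have hTanti : ∀ a b : ℕ, a ≤ b → T b ≤ T a := by
    intro a b hab
    apply Set.ncard_le_ncard _ (ffin a)
    intro j hj
    simp only [Set.mem_setOf_eq] at *
    omega
  have hTf0 : T (f 0) = 0 := by
    have : {j : ℕ | f 0 + 1 ≤ f j} = ∅ := by
      ext j
      simp only [Set.mem_setOf_eq, Set.mem_empty_iff_false, iff_false, not_le]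
      have := hdec 0 j (Nat.zero_le j)
      omega
    rw [hT]; simp only [this, Set.ncard_empty]
  have hTz : ∀ k, f 0 ≤ k → T k = 0 := by
    intro k hk
    have := hTanti (f 0) k hk
    omega
  have hTpos : ∀ k, k < f 0 → 1 ≤ T k := by
    intro k hk
    have := (fstar k 0).mp (by omega)
    omega
  have hstep : ∀ k, T k - T (k+1) < n := by
    intro k
    have hset : {j : ℕ | f j = k + 1} = Set.Ico (T (k+1)) (T k) := by
      ext j
      simp only [Set.mem_setOf_eq, Set.mem_Ico]
      have h1 := fstar k j
      have h2 := fstar (k+1) j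
      omega
    have := hreg (k+1) (by omega)
    rw [hset, ← Finset.coe_Ico, Set.ncard_coe_finset, Nat.card_Ico] at this
    exact this
  -- define the path
  set γ : ℕ → ℕ := fun k =>
    if k < f 0 then (((k:ℤ) - T k) % n).toNat else k % n with hγ
  have hγlt : ∀ k, γ k < n := by
    intro k
    rw [hγ]
    by_cases h : k < f 0
    · simp only [if_pos h]
      have h1 : ((k:ℤ) - T k) % n < n := Int.emod_lt_of_pos _ (by exact_mod_cast hn0)
      omega
    · simp only [if_neg h]
      exact Nat.mod_lt k hn0
  have hγup : ∀ k, f 0 ≤ k → γ k = k % n := by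
    intro k hk
    rw [hγ]
    simp only [if_neg (by omega : ¬ k < f 0)]
  have hγmem : γ ∈ PathSet n := ⟨hγlt, f 0, hγup⟩
  have hγcast : ∀ k, k < f 0 → (γ k : ℤ) = ((k:ℤ) - T k) % n := by
    intro k hk
    rw [hγ]
    simp only [if_pos hk]
    exact Int.toNat_of_nonneg (Int.emod_nonneg _ (by exact_mod_cast hn0.ne'))
  -- plen γ = f 0
  have hplen : plen n γ = f 0 := by
    have hle : plen n γ ≤ f 0 := Nat.sInf_le hγup
    rcases Nat.eq_or_lt_of_le hle with h | h
    · exact h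
    · exfalso
      have hf0 : 0 < f 0 := by omega
      have heq := plen_spec n γ hγmem (f 0 - 1) (by omega)
      set k := f 0 - 1 with hk
      have hA1 : 1 ≤ T k := hTpos k (by omega)
      have hA2 : T k < n := by
        have := hstep k
        have := hTz (k+1) (by omega)
        omega
      have hc := hγcast k (by omega)
      rw [heq] at hc
      have hc2 : ((k % n : ℕ) : ℤ) = (k : ℤ) % n := by push_cast; ring
      rw [hc2] at hc
      have hd : (((k:ℤ) - T k) - k) % n = 0 :=
        Int.emod_eq_emod_iff_emod_sub_eq_zero.mp hc.symm
      have hd2 : ((-(T k : ℤ))) % n = 0 := by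
        rw [show ((k:ℤ) - T k) - k = -(T k : ℤ) by ring] at hd
        exact hd
      have hdvd : (n:ℤ) ∣ (T k : ℤ) := by
        have := Int.dvd_of_emod_eq_zero hd2
        exact (dvd_neg.mp this)
      have := Int.le_of_dvd (by exact_mod_cast hA1) hdvd
      have : (n:ℤ) ≤ T k := this
      exact absurd hA2 (by exact_mod_cast not_lt.mpr this)
  -- tseq recovers T
  have htseq : ∀ k, tseq n γ (f 0) k = (T k : ℤ) := by
    have key : ∀ m k, f 0 - k ≤ m → tseq n γ (f 0) k = (T k : ℤ) := by
      intro m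
      induction m with
      | zero =>
        intro k hk
        rw [tseq_zero n γ (f 0) k (by omega), hTz k (by omega)]
        simp
      | succ m ih =>
        intro k hk
        by_cases h : f 0 ≤ k
        · rw [tseq_zero n γ (f 0) k h, hTz k h]; simp
        · rw [tseq_succ n γ (f 0) k (by omega), ih (k+1) (by omega)]
          have hc := hγcast k (by omega)
          rw [hc]
          rw [show (k:ℤ) - ((k:ℤ) - T k) % n - (T (k+1) : ℤ)
              = ((k:ℤ) - T (k+1)) - ((k:ℤ) - T k) % n by ring]
          rw [emod_sub_emod]
          rw [show ((k:ℤ) - T (k+1)) - ((k:ℤ) - T k) = (T k : ℤ) - T (k+1) by ring]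
          have h1 : T (k+1) ≤ T k := hTanti k (k+1) (by omega)
          have h2 := hstep k
          rw [Int.emod_eq_of_lt (by omega) (by omega)]
          omega
    intro k
    exact key (f 0) k (by omega)
  -- highestLift γ = f
  refine ⟨γ, hγmem, ?_⟩
  funext j
  simp only [highestLift, hplen]
  have hset : {k : ℕ | (j : ℤ) + 1 ≤ tseq n γ (f 0) k} = Set.Iio (f j) := by
    ext k
    simp only [Set.mem_setOf_eq, Set.mem_Iio, htseq k]
    have := fstar k j
    constructor
    · intro hh
      have : j < T k := by exact_mod_cast (by omega : (j:ℤ) < T k)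
      omega
    · intro hh
      have : j < T k := (fstar k j).mp (by omega)
      omega
  rw [hset, ← Finset.coe_Iio, Set.ncard_coe_finset, Nat.card_Iio]


/-- The highest-lift map is a bijection between `Λ₀`-paths and `n`-regular partitions. -/
theorem stmt3 (n : ℕ) (hn : 2 ≤ n) :
    Set.BijOn (highestLift n) (PathSet n) (RegularSet n) := by
  exact ⟨hl_mapsTo n hn, hl_injOn n hn, hl_surjOn n hn⟩
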